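/- With the notation above, let additionally c lie in F⁻¹(1) (so F∘c = 1) and let C = y^i ∂/∂y^i be the radial (Liouville) field. Then g_{c(θ)}(C∘c, c'') = −1 for all θ; equivalently, the acceleration of the central-affine arcwise parametrized indicatrix curve satisfies c'' = −(λ∘c) c' − (1/(F∘c)) C₀∘c where C₀ = C/F. -/

import Mathlib

/-- The Riemann–Finsler metric: the second derivative of the energy
`E = F²/2` as a bilinear form. -/
noncomputable def rfMetric (F : (Fin 2 → ℝ) → ℝ) (y v w : Fin 2 → ℝ) : ℝ :=
  fderiv ℝ (fderiv ℝ (fun z => F z ^ 2 / 2)) y v w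

/-- The (lowered) first Cartan tensor `C_{ijk} = (1/2) ∂g_{ij}/∂y^k` as a
trilinear form: half of the third derivative of the energy `E = F²/2`. -/
noncomputable def cartan (F : (Fin 2 → ℝ) → ℝ) (y u v w : Fin 2 → ℝ) : ℝ :=
  (1 / 2) * fderiv ℝ (fun z => fderiv ℝ (fderiv ℝ (fun z' => F z' ^ 2 / 2)) z u v) y w

noncomputable def En (F : (Fin 2 → ℝ) → ℝ) : (Fin 2 → ℝ) → ℝ := fun z => F z ^ 2 / 2

open Filter

section Aux


variable {F : (Fin 2 → ℝ) → ℝ}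

lemma Eat (hF : ContDiffOn ℝ (⊤ : ℕ∞) F {0}ᶜ) {y : Fin 2 → ℝ} (hy : y ≠ 0) :
    ContDiffAt ℝ (⊤ : ℕ∞) (En F) y := by
  have h := hF.contDiffAt (isOpen_compl_singleton.mem_nhds (by simpa using hy))
  exact (h.pow 2).div_const 2

lemma Gat (hF : ContDiffOn ℝ (⊤ : ℕ∞) F {0}ᶜ) {y : Fin 2 → ℝ} (hy : y ≠ 0) :
    ContDiffAt ℝ (⊤ : ℕ∞) (fderiv ℝ (En F)) y :=
  (Eat hF hy).fderiv_right (by simp)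

lemma Hat (hF : ContDiffOn ℝ (⊤ : ℕ∞) F {0}ᶜ) {y : Fin 2 → ℝ} (hy : y ≠ 0) :
    ContDiffAt ℝ (⊤ : ℕ∞) (fderiv ℝ (fderiv ℝ (En F))) y :=
  (Gat hF hy).fderiv_right (by simp)

lemma G_homog (hF : ContDiffOn ℝ (⊤ : ℕ∞) F {0}ᶜ)
    (hhom : ∀ t : ℝ, 0 < t → ∀ y, F (t • y) = t * F y)
    {t : ℝ} (ht : 0 < t) {y : Fin 2 → ℝ} (hy : y ≠ 0) :
    fderiv ℝ (En F) (t • y) = t • fderiv ℝ (En F) y := by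
  have hty : t • y ≠ 0 := smul_ne_zero ht.ne' hy
  have hdiff : DifferentiableAt ℝ (En F) y := (Eat hF hy).differentiableAt (by simp)
  have hdiffty : DifferentiableAt ℝ (En F) (t • y) := (Eat hF hty).differentiableAt (by simp)
  have h1 : HasFDerivAt (fun z => En F (t • z))
      ((fderiv ℝ (En F) (t • y)).comp (t • ContinuousLinearMap.id ℝ (Fin 2 → ℝ))) y :=
    hdiffty.hasFDerivAt.comp y ((hasFDerivAt_id y).const_smul t)
  have h2 : (fun z => En F (t • z)) =ᶠ[nhds y] fun z => t ^ 2 * En F z := by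
    filter_upwards [isOpen_compl_singleton.mem_nhds
      (show y ∈ ({0}ᶜ : Set (Fin 2 → ℝ)) by simpa using hy)] with z hz
    simp only [En, hhom t ht z]
    ring
  have h3 : HasFDerivAt (fun z => t ^ 2 * En F z)
      ((fderiv ℝ (En F) (t • y)).comp (t • ContinuousLinearMap.id ℝ (Fin 2 → ℝ))) y :=
    h1.congr_of_eventuallyEq h2.symm
  have h4 : HasFDerivAt (fun z => t ^ 2 * En F z) (t ^ 2 • fderiv ℝ (En F) y) y := by
    exact hdiff.hasFDerivAt.const_mul (t ^ 2)
  have h5 := h3.unique h4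
  ext v
  have happ : fderiv ℝ (En F) (t • y) (t • v) = t ^ 2 * fderiv ℝ (En F) y v := by
    simpa using congrArg (fun L : (Fin 2 → ℝ) →L[ℝ] ℝ => L v) h5
  have h6 : t * fderiv ℝ (En F) (t • y) v = t * (t * fderiv ℝ (En F) y v) := by
    rw [map_smul, smul_eq_mul] at happ
    rw [happ]; ring
  simpa [smul_eq_mul] using mul_left_cancel₀ ht.ne' h6

lemma euler1 (hF : ContDiffOn ℝ (⊤ : ℕ∞) F {0}ᶜ)
    (hhom : ∀ t : ℝ, 0 < t → ∀ y, F (t • y) = t * F y)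
    {y : Fin 2 → ℝ} (hy : y ≠ 0) :
    fderiv ℝ (En F) y y = F y ^ 2 := by
  have hdiff : DifferentiableAt ℝ (En F) y := (Eat hF hy).differentiableAt (by simp)
  have h0 : HasFDerivAt (En F) (fderiv ℝ (En F) y) ((fun t : ℝ => t • y) 1) := by
    simpa using hdiff.hasFDerivAt
  have hsm : HasDerivAt (fun t : ℝ => t • y) y 1 := by
    simpa using (hasDerivAt_id (1 : ℝ)).smul_const y
  have h1 : HasDerivAt (fun t : ℝ => En F (t • y)) (fderiv ℝ (En F) y y) 1 := by
    have h := h0.comp_hasDerivAt 1 hsm; exact h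
  have h2 : (fun t : ℝ => En F (t • y)) =ᶠ[nhds 1] fun t => t ^ 2 * En F y := by
    filter_upwards [eventually_gt_nhds zero_lt_one] with t ht
    simp only [En, hhom t ht y]
    ring
  have h3 : HasDerivAt (fun t : ℝ => t ^ 2 * En F y) (2 * En F y) 1 := by
    simpa using (hasDerivAt_pow 2 (1 : ℝ)).mul_const (En F y)
  have h4 := (h1.congr_of_eventuallyEq h2.symm).unique h3
  rw [h4]; simp [En]; ring

lemma euler2 (hF : ContDiffOn ℝ (⊤ : ℕ∞) F {0}ᶜ)
    (hhom : ∀ t : ℝ, 0 < t → ∀ y, F (t • y) = t * F y)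
    {y : Fin 2 → ℝ} (hy : y ≠ 0) :
    fderiv ℝ (fderiv ℝ (En F)) y y = fderiv ℝ (En F) y := by
  have hGdiff : DifferentiableAt ℝ (fderiv ℝ (En F)) y := (Gat hF hy).differentiableAt (by simp)
  have h0 : HasFDerivAt (fderiv ℝ (En F)) (fderiv ℝ (fderiv ℝ (En F)) y)
      ((fun t : ℝ => t • y) 1) := by
    simpa using hGdiff.hasFDerivAt
  have hsm : HasDerivAt (fun t : ℝ => t • y) y 1 := by
    simpa using (hasDerivAt_id (1 : ℝ)).smul_const y
  have h1 : HasDerivAt (fun t : ℝ => fderiv ℝ (En F) (t • y))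
      (fderiv ℝ (fderiv ℝ (En F)) y y) 1 := h0.comp_hasDerivAt 1 hsm
  have h2 : (fun t : ℝ => fderiv ℝ (En F) (t • y)) =ᶠ[nhds 1]
      fun t => t • fderiv ℝ (En F) y := by
    filter_upwards [eventually_gt_nhds zero_lt_one] with t ht
    exact G_homog hF hhom ht hy
  have h3 : HasDerivAt (fun t : ℝ => t • fderiv ℝ (En F) y) (fderiv ℝ (En F) y) 1 := by
    simpa using (hasDerivAt_id (1 : ℝ)).smul_const (fderiv ℝ (En F) y)
  exact (h1.congr_of_eventuallyEq h2.symm).unique h3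

lemma symm2 (hF : ContDiffOn ℝ (⊤ : ℕ∞) F {0}ᶜ) {y : Fin 2 → ℝ} (hy : y ≠ 0)
    (v w : Fin 2 → ℝ) :
    fderiv ℝ (fderiv ℝ (En F)) y v w = fderiv ℝ (fderiv ℝ (En F)) y w v := by
  have hev : ∀ᶠ z in nhds y, HasFDerivAt (En F) (fderiv ℝ (En F) z) z := by
    filter_upwards [isOpen_compl_singleton.mem_nhds
      (show y ∈ ({0}ᶜ : Set (Fin 2 → ℝ)) by simpa using hy)] with z hz
    exact ((Eat hF (by simpa using hz)).differentiableAt (by simp)).hasFDerivAt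
  exact second_derivative_symmetric_of_eventually hev
    (((Gat hF hy).differentiableAt (by simp)).hasFDerivAt) v w

lemma third_deriv (hF : ContDiffOn ℝ (⊤ : ℕ∞) F {0}ᶜ) {y : Fin 2 → ℝ} (hy : y ≠ 0)
    (u v w : Fin 2 → ℝ) :
    fderiv ℝ (fun z => fderiv ℝ (fderiv ℝ (En F)) z u v) y w =
      fderiv ℝ (fderiv ℝ (fderiv ℝ (En F))) y w u v := by
  have hHd : DifferentiableAt ℝ (fderiv ℝ (fderiv ℝ (En F))) y :=
    (Hat hF hy).differentiableAt (by simp)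
  have s1 : HasFDerivAt (fun z => fderiv ℝ (fderiv ℝ (En F)) z u)
      ((fderiv ℝ (fderiv ℝ (fderiv ℝ (En F))) y).flip u) y := by
    simpa using hHd.hasFDerivAt.clm_apply (hasFDerivAt_const u y)
  have s2 : HasFDerivAt (fun z => fderiv ℝ (fderiv ℝ (En F)) z u v)
      (((fderiv ℝ (fderiv ℝ (fderiv ℝ (En F))) y).flip u).flip v) y := by
    simpa using s1.clm_apply (hasFDerivAt_const v y)
  rw [s2.fderiv]
  simp [ContinuousLinearMap.flip_apply]

end Aux


/-- For a unit-speed curve `c` on the indicatrix `F⁻¹(1)` one has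
`g(C∘c, c'') = −1` (`C` the Liouville field, i.e. the vector `c(θ)` itself);
equivalently, `c'' = −(λ∘c) c' − (1/(F∘c)) C₀∘c` with `C₀ = C/F`, which on the
indicatrix (where `F∘c = 1`) reads `c'' = −(λ∘c) c' − c`. -/
theorem stmt11 (F : (Fin 2 → ℝ) → ℝ)
    (hF : ContDiffOn ℝ (⊤ : ℕ∞) F {0}ᶜ)
    (hhom : ∀ t : ℝ, 0 < t → ∀ y, F (t • y) = t * F y)
    (hpos : ∀ y : Fin 2 → ℝ, y ≠ 0 → ∀ v : Fin 2 → ℝ, v ≠ 0 → 0 < rfMetric F y v v)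
    (c : ℝ → Fin 2 → ℝ) (hc : ContDiff ℝ (⊤ : ℕ∞) c) (hc0 : ∀ θ, c θ ≠ 0)
    (hind : ∀ θ, F (c θ) = 1)
    (hunit : ∀ θ, rfMetric F (c θ) (deriv c θ) (deriv c θ) = 1) :
    (∀ θ, rfMetric F (c θ) (c θ) (deriv (deriv c) θ) = -1) ∧
    (∀ θ, deriv (deriv c) θ
      = -(cartan F (c θ) (deriv c θ) (deriv c θ) (deriv c θ)) • deriv c θ - c θ) := by
  have hcinf : ContDiff ℝ (⊤ : ℕ∞) c := hc.of_le (by simp)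
  have hdiff1 : Differentiable ℝ c := (contDiff_infty_iff_deriv.mp hcinf).1
  have hc' : ContDiff ℝ (⊤ : ℕ∞) (deriv c) := (contDiff_infty_iff_deriv.mp hcinf).2
  have hdiff2 : Differentiable ℝ (deriv c) := (contDiff_infty_iff_deriv.mp hc').1
  have hdc : ∀ θ, HasDerivAt c (deriv c θ) θ := fun θ => (hdiff1 θ).hasDerivAt
  have hdc2 : ∀ θ, HasDerivAt (deriv c) (deriv (deriv c) θ) θ := fun θ => (hdiff2 θ).hasDerivAt
  -- notation
  have hrf : ∀ y v w, rfMetric F y v w = fderiv ℝ (fderiv ℝ (En F)) y v w := fun _ _ _ => rfl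
  have hct : ∀ y u v w, cartan F y u v w =
      (1 / 2) * fderiv ℝ (fun z => fderiv ℝ (fderiv ℝ (En F)) z u v) y w := fun _ _ _ _ => rfl
  -- Step A: G(c θ) (c' θ) = 0
  have stepA : ∀ θ, fderiv ℝ (En F) (c θ) (deriv c θ) = 0 := by
    intro θ
    have h1 : HasDerivAt (fun s => En F (c s)) (fderiv ℝ (En F) (c θ) (deriv c θ)) θ :=
      (((Eat hF (hc0 θ)).differentiableAt (by simp)).hasFDerivAt).comp_hasDerivAt θ (hdc θ)
    have h2 : (fun s => En F (c s)) = fun _ => (1 : ℝ) / 2 := by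
      funext s; simp [En, hind s]
    rw [h2] at h1
    exact h1.unique (hasDerivAt_const θ _)
  -- derivative of s ↦ G (c s)
  have hGc : ∀ θ, HasDerivAt (fun s => fderiv ℝ (En F) (c s))
      (fderiv ℝ (fderiv ℝ (En F)) (c θ) (deriv c θ)) θ := fun θ =>
    (((Gat hF (hc0 θ)).differentiableAt (by simp)).hasFDerivAt).comp_hasDerivAt θ (hdc θ)
  -- Step B: G(c θ) (c'' θ) = -1
  have stepB : ∀ θ, fderiv ℝ (En F) (c θ) (deriv (deriv c) θ) = -1 := by
    intro θ
    have h1 : HasDerivAt (fun s => fderiv ℝ (En F) (c s) (deriv c s))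
        (fderiv ℝ (fderiv ℝ (En F)) (c θ) (deriv c θ) (deriv c θ) +
          fderiv ℝ (En F) (c θ) (deriv (deriv c) θ)) θ := (hGc θ).clm_apply (hdc2 θ)
    have h2 : (fun s => fderiv ℝ (En F) (c s) (deriv c s)) = fun _ => (0 : ℝ) :=
      funext stepA
    rw [h2] at h1
    have h3 := h1.unique (hasDerivAt_const θ _)
    have h4 : fderiv ℝ (fderiv ℝ (En F)) (c θ) (deriv c θ) (deriv c θ) = 1 :=
      (hrf _ _ _) ▸ hunit θ
    rw [h4] at h3
    linarith
  -- Part 1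
  have part1 : ∀ θ, rfMetric F (c θ) (c θ) (deriv (deriv c) θ) = -1 := by
    intro θ
    rw [hrf]
    have h := euler2 hF hhom (hc0 θ)
    rw [h]
    exact stepB θ
  -- Step C: g(c', c'') = -λ
  have hHc : ∀ θ, HasDerivAt (fun s => fderiv ℝ (fderiv ℝ (En F)) (c s))
      (fderiv ℝ (fderiv ℝ (fderiv ℝ (En F))) (c θ) (deriv c θ)) θ := fun θ =>
    (((Hat hF (hc0 θ)).differentiableAt (by simp)).hasFDerivAt).comp_hasDerivAt θ (hdc θ)
  have stepC : ∀ θ, fderiv ℝ (fderiv ℝ (En F)) (c θ) (deriv c θ) (deriv (deriv c) θ) =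
      -(cartan F (c θ) (deriv c θ) (deriv c θ) (deriv c θ)) := by
    intro θ
    have h1 : HasDerivAt (fun s => fderiv ℝ (fderiv ℝ (En F)) (c s) (deriv c s))
        (fderiv ℝ (fderiv ℝ (fderiv ℝ (En F))) (c θ) (deriv c θ) (deriv c θ) +
          fderiv ℝ (fderiv ℝ (En F)) (c θ) (deriv (deriv c) θ)) θ :=
      (hHc θ).clm_apply (hdc2 θ)
    have h2 : HasDerivAt (fun s => fderiv ℝ (fderiv ℝ (En F)) (c s) (deriv c s) (deriv c s))
        ((fderiv ℝ (fderiv ℝ (fderiv ℝ (En F))) (c θ) (deriv c θ) (deriv c θ) +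
          fderiv ℝ (fderiv ℝ (En F)) (c θ) (deriv (deriv c) θ)) (deriv c θ) +
          fderiv ℝ (fderiv ℝ (En F)) (c θ) (deriv c θ) (deriv (deriv c) θ)) θ :=
      h1.clm_apply (hdc2 θ)
    have h3 : (fun s => fderiv ℝ (fderiv ℝ (En F)) (c s) (deriv c s) (deriv c s)) =
        fun _ => (1 : ℝ) := by
      funext s; exact (hrf _ _ _) ▸ hunit s
    rw [h3] at h2
    have h4 := h2.unique (hasDerivAt_const θ _)
    rw [ContinuousLinearMap.add_apply] at h4
    have hsym : fderiv ℝ (fderiv ℝ (En F)) (c θ) (deriv (deriv c) θ) (deriv c θ) =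
        fderiv ℝ (fderiv ℝ (En F)) (c θ) (deriv c θ) (deriv (deriv c) θ) :=
      symm2 hF (hc0 θ) _ _
    have hlam : cartan F (c θ) (deriv c θ) (deriv c θ) (deriv c θ) =
        (1 / 2) * fderiv ℝ (fderiv ℝ (fderiv ℝ (En F))) (c θ) (deriv c θ) (deriv c θ)
          (deriv c θ) := by
      rw [hct, third_deriv hF (hc0 θ)]
    rw [hsym] at h4
    rw [hlam]
    linarith
  refine ⟨part1, fun θ => ?_⟩
  -- abbreviations for the final linear algebra
  set y := c θ with hy
  set u := deriv c θ with hu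
  set w := deriv (deriv c) θ with hw
  set l := cartan F y u u u with hl
  set g := fderiv ℝ (fderiv ℝ (En F)) y with hg
  have gyy : g y y = 1 := by
    rw [hg, euler2 hF hhom (hc0 θ), euler1 hF hhom (hc0 θ), hind θ]; norm_num
  have gyu : g y u = 0 := by
    rw [hg, euler2 hF hhom (hc0 θ)]; exact stepA θ
  have guy : g u y = 0 := by rw [hg, symm2 hF (hc0 θ), ← hg]; exact gyu
  have guu : g u u = 1 := (hrf _ _ _) ▸ hunit θ
  have gyw : g y w = -1 := by
    rw [hg, euler2 hF hhom (hc0 θ)]; exact stepB θ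
  have guw : g u w = -l := stepC θ
  -- linear independence of y, u
  have hli : LinearIndependent ℝ ![y, u] := by
    rw [LinearIndependent.pair_iff]
    intro s t hst
    have h1 : g y (s • y + t • u) = s := by
      rw [map_add, map_smul, map_smul, gyy, gyu]; simp
    have h2 : g u (s • y + t • u) = t := by
      rw [map_add, map_smul, map_smul, guy, guu]; simp
    rw [hst, map_zero] at h1 h2
    exact ⟨h1.symm, h2.symm⟩
  have hcard : Fintype.card (Fin 2) = Module.finrank ℝ (Fin 2 → ℝ) := by simp
  have hspan : Submodule.span ℝ {y, u} = ⊤ := by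
    have h := (basisOfLinearIndependentOfCardEqFinrank hli hcard).span_eq
    rw [coe_basisOfLinearIndependentOfCardEqFinrank] at h
    rwa [show Set.range ![y, u] = {y, u} by
      rw [Matrix.range_cons, Matrix.range_cons, Matrix.range_empty]
      simp [Set.pair_comm]] at h
  -- decompose W := w + l • u + y
  have hWmem : w + l • u + y ∈ Submodule.span ℝ ({y, u} : Set (Fin 2 → ℝ)) := by
    rw [hspan]; trivial
  obtain ⟨a, b, hab⟩ := Submodule.mem_span_pair.mp hWmem
  have gyW : g y (w + l • u + y) = 0 := by
    rw [map_add, map_add, map_smul, gyw, gyu, gyy]; simp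
  have guW : g u (w + l • u + y) = 0 := by
    rw [map_add, map_add, map_smul, guw, guu, guy]; simp
  have ha : a = 0 := by
    have := congrArg (g y) hab
    rw [map_add, map_smul, map_smul, gyy, gyu, gyW] at this
    simpa using this
  have hbz : b = 0 := by
    have := congrArg (g u) hab
    rw [map_add, map_smul, map_smul, guy, guu, guW] at this
    simpa using this
  have hW0 : w + l • u + y = 0 := by
    rw [← hab, ha, hbz]; simp
  have : w = -l • u - y := by
    have h := hW0
    rw [neg_smul]
    linear_combination (norm := module) h
  exact this
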